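/- (Global boundedness of aCLF closed-loop trajectories.) Under the hypotheses of the composite Lyapunov derivative bound — V_a : ℝⁿ × ℝᵖ → ℝ continuously differentiable with α₁(‖x‖, θ) ≤ V_a(x,θ) for all x, θ, where for each θ the map r ↦ α₁(r,θ) is a class K∞ function (continuous, strictly increasing, α₁(0,θ)=0, unbounded); Γ symmetric positive definite; trajectories x(t), θ̂(t), u(t) on [0,∞) satisfying the closed-loop dynamics ẋ = f(x) + F(x)θ⋆ + g(x)u, the update law θ̂̇ = Γ((∂V_a/∂x)F(x))ᵀ, and the aCLF inequality with α₃(‖x(t)‖,θ̂(t)) ≥ 0 — let V(t) = V_a(x(t),θ̂(t)) + (1/2)(θ⋆−θ̂(t))ᵀ Γ⁻¹ (θ⋆−θ̂(t)). Then for all t ≥ 0: α₁(‖x(t)‖, θ̂(t)) ≤ V(0) and (1/2)(θ⋆−θ̂(t))ᵀ Γ⁻¹ (θ⋆−θ̂(t)) ≤ V(0); in particular ‖θ⋆ − θ̂(t)‖² ≤ 2 λ_max(Γ) V(0), so the solution (x(t), θ̂(t)) is globally bounded. -/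

import Mathlib

open Matrix Filter

/-- The Euclidean norm of a vector in `ℝ^k`. -/
noncomputable def euclNorm {k : ℕ} (v : Fin k → ℝ) : ℝ :=
  ‖(WithLp.equiv 2 (Fin k → ℝ)).symm v‖

/-!
Along the closed loop, the composite Lyapunov function `V = V_a + ½ θ̃ᵀ Γ⁻¹ θ̃` (with
`θ̃ = θ⋆ - θ̂`) has derivative equal to the left-hand side of the aCLF inequality: the update law
`θ̂̇ = Γ τ` makes the derivative of the quadratic term cancel the unknown contribution
`(∂V_a/∂x) F(x) θ̃`, and `(∂V_a/∂θ) Γ τ` is exactly the `Γ`-shift of `θ̂` inside the aCLF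
inequality. Hence `V` is nonincreasing. Both summands of `V` are nonnegative, so each is at most
`V(0)`, and `‖θ̃‖² ≤ λ_max(Γ) θ̃ᵀ Γ⁻¹ θ̃` because `Γ⁻¹ ≥ λ_max(Γ)⁻¹ I`.
-/

open scoped MatrixOrder

section

variable {ι κ : Type*}

theorem euclNorm_sq {k : ℕ} (v : Fin k → ℝ) : euclNorm v ^ 2 = v ⬝ᵥ v := by
  rw [euclNorm, EuclideanSpace.real_norm_sq_eq]
  simp [dotProduct, sq]

theorem LinearMapClass.apply_eq_dotProduct [Fintype κ] [DecidableEq κ] {R F : Type*}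
    [CommSemiring R] [FunLike F (κ → R) R] [LinearMapClass F R (κ → R) R] (L : F) (w : κ → R) :
    L w = w ⬝ᵥ fun i => L (Pi.single i 1) := by
  conv_lhs => rw [pi_eq_sum_univ' w]
  simp [dotProduct]

theorem LinearMapClass.apply_mulVec_eq_dotProduct [Fintype κ] [DecidableEq κ] {R F : Type*}
    [CommSemiring R] [FunLike F (ι → R) R] [LinearMapClass F R (ι → R) R] (L : F)
    (A : Matrix ι κ R) (e : κ → R) :
    L (A *ᵥ e) = e ⬝ᵥ fun i => L (Aᵀ i) := by
  simpa [mulVec_single_one, col] using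
    LinearMapClass.apply_eq_dotProduct ((L : (ι → R) →ₗ[R] R) ∘ₗ A.mulVecLin) e

theorem HasDerivAt.dotProduct [Fintype ι] {a b : ℝ → ι → ℝ} {a' b' : ι → ℝ} {t : ℝ}
    (ha : HasDerivAt a a' t) (hb : HasDerivAt b b' t) :
    HasDerivAt (fun s => a s ⬝ᵥ b s) (a' ⬝ᵥ b t + a t ⬝ᵥ b') t := by
  simpa [_root_.dotProduct, Finset.sum_add_distrib] using
    HasDerivAt.fun_sum fun i _ => ((hasDerivAt_pi.mp ha i).mul (hasDerivAt_pi.mp hb i))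

theorem HasDerivAt.mulVec [Fintype ι] (M : Matrix κ ι ℝ) {b : ℝ → ι → ℝ} {b' : ι → ℝ} {t : ℝ}
    (hb : HasDerivAt b b' t) : HasDerivAt (fun s => M *ᵥ b s) (M *ᵥ b') t :=
  hasDerivAt_pi.mpr fun i => by
    simpa [Matrix.mulVec, _root_.dotProduct] using
      HasDerivAt.fun_sum fun j _ => (hasDerivAt_pi.mp hb j).const_mul (M i j)

theorem HasDerivAt.dotProduct_mulVec_self [Fintype ι] {M : Matrix ι ι ℝ} (hM : M.IsSymm)
    {e : ℝ → ι → ℝ} {e' : ι → ℝ} {t : ℝ} (he : HasDerivAt e e' t) :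
    HasDerivAt (fun s => e s ⬝ᵥ M *ᵥ e s) (2 * (e' ⬝ᵥ M *ᵥ e t)) t := by
  convert he.dotProduct (he.mulVec M) using 1
  rw [dotProduct_mulVec, ← mulVec_transpose, hM.eq, dotProduct_comm]
  ring

theorem DifferentiableAt.hasDerivAt_comp_prodMk {E F G : Type*} [NormedAddCommGroup E]
    [NormedSpace ℝ E] [NormedAddCommGroup F] [NormedSpace ℝ F] [NormedAddCommGroup G]
    [NormedSpace ℝ G] {V : E × F → G} {a : ℝ → E} {b : ℝ → F} {a' : E} {b' : F} {t : ℝ}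
    (hV : DifferentiableAt ℝ V (a t, b t)) (ha : HasDerivAt a a' t) (hb : HasDerivAt b b' t) :
    HasDerivAt (fun s => V (a s, b s))
      (fderiv ℝ (fun y => V (y, b t)) (a t) a' + fderiv ℝ (fun z => V (a t, z)) (b t) b') t := by
  have hfst : HasFDerivAt (fun y => V (y, b t)) _ (a t) :=
    hV.hasFDerivAt.comp (a t) (hasFDerivAt_prodMk_left (𝕜 := ℝ) (a t) (b t))
  have hsnd : HasFDerivAt (fun z => V (a t, z)) _ (b t) :=
    hV.hasFDerivAt.comp (b t) (hasFDerivAt_prodMk_right (𝕜 := ℝ) (a t) (b t))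
  rw [hfst.fderiv, hsnd.fderiv]
  refine (hV.hasFDerivAt.comp_hasDerivAt t (ha.prodMk hb)).congr_deriv ?_
  simp only [ContinuousLinearMap.comp_apply, ContinuousLinearMap.inl_apply,
    ContinuousLinearMap.inr_apply, ← map_add, Prod.mk_add_mk, add_zero, zero_add]

theorem antitoneOn_Ici_of_hasDerivAt_nonpos {V V' : ℝ → ℝ} {a : ℝ}
    (hV : ∀ t, a ≤ t → HasDerivAt V (V' t) t) (hV' : ∀ t, a ≤ t → V' t ≤ 0) :
    AntitoneOn V (Set.Ici a) := by
  refine antitoneOn_of_hasDerivWithinAt_nonpos (f' := V') (convex_Ici a)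
    (fun t ht => (hV t ht).continuousAt.continuousWithinAt) (fun t ht => ?_) (fun t ht => ?_)
  · rw [interior_Ici] at ht ⊢
    exact (hV t ht.le).hasDerivWithinAt
  · rw [interior_Ici] at ht
    exact hV' t ht.le

theorem Matrix.PosDef.algebraMap_inv_iSup_eigenvalues_le_inv [Fintype ι] [DecidableEq ι]
    {A : Matrix ι ι ℝ} (hA : A.PosDef) :
    algebraMap ℝ (Matrix ι ι ℝ) (⨆ i, hA.1.eigenvalues i)⁻¹ ≤ A⁻¹ := by
  rw [algebraMap_le_iff_le_spectrum hA.inv.1]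
  intro x hx
  rw [← IsUnit.unit_spec hA.isUnit, ← coe_units_inv, ← spectrum.map_inv, Set.mem_inv,
    IsUnit.unit_spec, hA.1.spectrum_real_eq_range_eigenvalues] at hx
  obtain ⟨i, hi⟩ := hx
  calc (⨆ i, hA.1.eigenvalues i)⁻¹ ≤ (x⁻¹)⁻¹ :=
        inv_anti₀ (hi ▸ hA.eigenvalues_pos i) (hi ▸ le_ciSup (Set.finite_range _).bddAbove i)
    _ = x := inv_inv x

theorem Matrix.PosDef.dotProduct_self_le_iSup_eigenvalues_mul [Fintype ι] [DecidableEq ι]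
    {A : Matrix ι ι ℝ} (hA : A.PosDef) (v : ι → ℝ) :
    v ⬝ᵥ v ≤ (⨆ i, hA.1.eigenvalues i) * (v ⬝ᵥ A⁻¹ *ᵥ v) := by
  rcases isEmpty_or_nonempty ι with _ | ⟨⟨i⟩⟩
  · simp [dotProduct]
  have hpos : 0 < ⨆ i, hA.1.eigenvalues i :=
    (hA.eigenvalues_pos i).trans_le (le_ciSup (Set.finite_range _).bddAbove i)
  have h := (le_iff.mp hA.algebraMap_inv_iSup_eigenvalues_le_inv).dotProduct_mulVec_nonneg v
  rwa [Algebra.algebraMap_eq_smul_one, sub_mulVec, smul_mulVec, one_mulVec, dotProduct_sub,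
    dotProduct_smul, smul_eq_mul, sub_nonneg, inv_mul_le_iff₀ hpos] at h

theorem hasDerivAt_compositeLyapunov [Fintype ι] [Fintype κ] [DecidableEq κ]
    {Va : (ι → ℝ) × (κ → ℝ) → ℝ} {Γ : Matrix κ κ ℝ} {A : Matrix ι κ ℝ} (θs : κ → ℝ)
    {x : ℝ → ι → ℝ} {θh : ℝ → κ → ℝ} {x' : ι → ℝ} {τ : κ → ℝ} {t : ℝ}
    (hVa : DifferentiableAt ℝ Va (x t, θh t)) (hΓ : Γ.IsSymm) (hΓu : IsUnit Γ)
    (hx : HasDerivAt x x' t) (hθh : HasDerivAt θh (Γ *ᵥ τ) t)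
    (hτ : τ = fun i => fderiv ℝ (fun y => Va (y, θh t)) (x t) (Aᵀ i)) :
    HasDerivAt (fun s => Va (x s, θh s) + 1 / 2 * ((θs - θh s) ⬝ᵥ Γ⁻¹ *ᵥ (θs - θh s)))
      (fderiv ℝ (fun y => Va (y, θh t)) (x t) (x' - A *ᵥ (θs - θh t - Γ *ᵥ
        fun i => fderiv ℝ (fun θ => Va (x t, θ)) (θh t) (Pi.single i 1)))) t := by
  set Dx := fderiv ℝ (fun y => Va (y, θh t)) (x t)
  set Dθ := fderiv ℝ (fun θ => Va (x t, θ)) (θh t)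
  have hquad := (hθh.const_sub θs).dotProduct_mulVec_self hΓ.inv
  refine ((hVa.hasDerivAt_comp_prodMk hx hθh).add (hquad.const_mul (1 / 2))).congr_deriv ?_
  have hτ_dot : ∀ v, v ⬝ᵥ τ = Dx (A *ᵥ v) := fun v => by
    rw [hτ, LinearMapClass.apply_mulVec_eq_dotProduct]
  have hcross : (Γ *ᵥ τ) ⬝ᵥ Γ⁻¹ *ᵥ (θs - θh t) = Dx (A *ᵥ (θs - θh t)) := by
    rw [← hτ_dot, dotProduct_comm, dotProduct_mulVec, ← mulVec_transpose, hΓ.eq, mulVec_mulVec,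
      mul_nonsing_inv _ (Γ.isUnit_iff_isUnit_det.mp hΓu), one_mulVec]
  have hparam : Dθ (Γ *ᵥ τ) = Dx (A *ᵥ Γ *ᵥ fun i => Dθ (Pi.single i 1)) := by
    rw [LinearMapClass.apply_eq_dotProduct Dθ, ← hτ_dot, dotProduct_comm, dotProduct_mulVec,
      ← mulVec_transpose, hΓ.eq]
  rw [neg_dotProduct, hcross, hparam]
  simp only [map_sub, mulVec_sub]
  ring

end

theorem aclf_trajectories_globally_bounded_general
    {n p m : ℕ}
    (Va : ((Fin n → ℝ) × (Fin p → ℝ)) → ℝ) (hVa : ContDiff ℝ 1 Va)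
    (α₁ : ℝ → (Fin p → ℝ) → ℝ)
    -- for each θ, r ↦ α₁(r,θ) is class K∞
    (hα₁mono : ∀ θ, StrictMonoOn (fun r => α₁ r θ) (Set.Ici 0))
    (hα₁0 : ∀ θ, α₁ 0 θ = 0)
    -- lower bound α₁(‖x‖,θ) ≤ V_a(x,θ)
    (hlow : ∀ x θ, α₁ (euclNorm x) θ ≤ Va (x, θ))
    (f : (Fin n → ℝ) → (Fin n → ℝ))
    (F : (Fin n → ℝ) → Matrix (Fin n) (Fin p) ℝ)
    (g : (Fin n → ℝ) → Matrix (Fin n) (Fin m) ℝ)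
    (Γ : Matrix (Fin p) (Fin p) ℝ) (hΓ : Γ.PosDef)
    (θs : Fin p → ℝ)
    (α₃ : ℝ → (Fin p → ℝ) → ℝ)
    (x : ℝ → (Fin n → ℝ)) (θh : ℝ → (Fin p → ℝ)) (u : ℝ → (Fin m → ℝ))
    -- the adaptation law τ(t) = ((∂V_a/∂x)(x(t),θ̂(t)) · F(x(t)))ᵀ
    (τ : ℝ → (Fin p → ℝ))
    (hτ : ∀ t, 0 ≤ t → τ t = fun i =>
      (fderiv ℝ (fun y => Va (y, θh t)) (x t)) (fun j => F (x t) j i))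
    -- closed-loop dynamics ẋ = f(x) + F(x) θ⋆ + g(x) u
    (hx : ∀ t, 0 ≤ t → HasDerivAt x
      (f (x t) + (F (x t)).mulVec θs + (g (x t)).mulVec (u t)) t)
    -- parameter update θ̂̇ = Γ τ
    (hθh : ∀ t, 0 ≤ t → HasDerivAt θh (Γ.mulVec (τ t)) t)
    -- the aCLF inequality
    (hclf : ∀ t, 0 ≤ t →
      (fderiv ℝ (fun y => Va (y, θh t)) (x t))
        (f (x t)
          + (F (x t)).mulVec
              (θh t + Γ.mulVec (fun i =>
                (fderiv ℝ (fun θ => Va (x t, θ)) (θh t)) (Pi.single i 1)))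
          + (g (x t)).mulVec (u t))
      ≤ -α₃ (euclNorm (x t)) (θh t))
    -- nonnegativity of α₃ along the trajectory
    (hα₃ : ∀ t, 0 ≤ t → 0 ≤ α₃ (euclNorm (x t)) (θh t))
    -- the composite Lyapunov function
    (V : ℝ → ℝ)
    (hV : V = fun t => Va (x t, θh t)
      + (1 / 2) * ((θs - θh t) ⬝ᵥ Γ⁻¹.mulVec (θs - θh t))) :
    ∀ t, 0 ≤ t →
      α₁ (euclNorm (x t)) (θh t) ≤ V 0 ∧
      (1 / 2) * ((θs - θh t) ⬝ᵥ Γ⁻¹.mulVec (θs - θh t)) ≤ V 0 ∧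
      (euclNorm (θs - θh t)) ^ 2 ≤ 2 * (⨆ i, hΓ.1.eigenvalues i) * V 0 := by
  have hΓsymm : Γ.IsSymm := isHermitian_iff_isSymm.mp hΓ.1
  have hV_deriv : ∀ t, 0 ≤ t → HasDerivAt V
      (fderiv ℝ (fun y => Va (y, θh t)) (x t) (f (x t) + F (x t) *ᵥ (θh t + Γ *ᵥ
        fun i => fderiv ℝ (fun θ => Va (x t, θ)) (θh t) (Pi.single i 1)) + g (x t) *ᵥ u t)) t := by
    intro t ht
    rw [hV]
    refine (hasDerivAt_compositeLyapunov θs (hVa.differentiable one_ne_zero _) hΓsymm hΓ.isUnit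
      (hx t ht) (hθh t ht) (hτ t ht)).congr_deriv ?_
    congr 1
    simp only [mulVec_add, mulVec_sub]
    abel
  have hV_antitone : AntitoneOn V (Set.Ici 0) := antitoneOn_Ici_of_hasDerivAt_nonpos hV_deriv
    fun t ht => (hclf t ht).trans (neg_nonpos.mpr (hα₃ t ht))
  intro t ht
  have hVt : Va (x t, θh t) + 1 / 2 * ((θs - θh t) ⬝ᵥ Γ⁻¹ *ᵥ (θs - θh t)) ≤ V 0 := by
    simpa only [hV] using hV_antitone Set.self_mem_Ici ht ht
  have hVa_nonneg : 0 ≤ Va (x t, θh t) :=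
    calc 0 = α₁ 0 (θh t) := (hα₁0 _).symm
      _ ≤ α₁ (euclNorm (x t)) (θh t) :=
        (hα₁mono _).monotoneOn Set.self_mem_Ici (norm_nonneg _) (norm_nonneg _)
      _ ≤ Va (x t, θh t) := hlow _ _
  have hq_nonneg : 0 ≤ (θs - θh t) ⬝ᵥ Γ⁻¹ *ᵥ (θs - θh t) :=
    hΓ.inv.posSemidef.dotProduct_mulVec_nonneg _
  refine ⟨by linarith [hlow (x t) (θh t)], by linarith, ?_⟩
  calc euclNorm (θs - θh t) ^ 2 = (θs - θh t) ⬝ᵥ (θs - θh t) := euclNorm_sq _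
    _ ≤ (⨆ i, hΓ.1.eigenvalues i) * ((θs - θh t) ⬝ᵥ Γ⁻¹ *ᵥ (θs - θh t)) :=
      hΓ.dotProduct_self_le_iSup_eigenvalues_mul _
    _ ≤ 2 * (⨆ i, hΓ.1.eigenvalues i) * V 0 := by
      nlinarith [Real.iSup_nonneg fun i => (hΓ.eigenvalues_pos i).le]

/-- Global boundedness of aCLF closed-loop trajectories: under the hypotheses
of the composite Lyapunov derivative bound, with `α₁(‖x‖,θ) ≤ V_a(x,θ)` for a
class-K∞ (in its first argument) function `α₁`, and `α₃ ≥ 0` along the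
trajectory, the composite Lyapunov function
`V(t) = V_a(x(t),θ̂(t)) + (1/2) θ̃ᵀΓ⁻¹θ̃` satisfies, for all `t ≥ 0`,
`α₁(‖x(t)‖,θ̂(t)) ≤ V(0)`, `(1/2)θ̃(t)ᵀΓ⁻¹θ̃(t) ≤ V(0)`, and
`‖θ⋆−θ̂(t)‖² ≤ 2 λ_max(Γ) V(0)`. -/
theorem aclf_trajectories_globally_bounded
    {n p m : ℕ}
    (Va : ((Fin n → ℝ) × (Fin p → ℝ)) → ℝ) (hVa : ContDiff ℝ 1 Va)
    (α₁ : ℝ → (Fin p → ℝ) → ℝ)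
    -- for each θ, r ↦ α₁(r,θ) is class K∞
    (hα₁cont : ∀ θ, ContinuousOn (fun r => α₁ r θ) (Set.Ici 0))
    (hα₁mono : ∀ θ, StrictMonoOn (fun r => α₁ r θ) (Set.Ici 0))
    (hα₁0 : ∀ θ, α₁ 0 θ = 0)
    (hα₁top : ∀ θ, Tendsto (fun r => α₁ r θ) atTop atTop)
    -- lower bound α₁(‖x‖,θ) ≤ V_a(x,θ)
    (hlow : ∀ x θ, α₁ (euclNorm x) θ ≤ Va (x, θ))
    (f : (Fin n → ℝ) → (Fin n → ℝ)) (hf : Continuous f)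
    (F : (Fin n → ℝ) → Matrix (Fin n) (Fin p) ℝ) (hF : Continuous F)
    (g : (Fin n → ℝ) → Matrix (Fin n) (Fin m) ℝ) (hg : Continuous g)
    (Γ : Matrix (Fin p) (Fin p) ℝ) (hΓ : Γ.PosDef)
    (θs : Fin p → ℝ)
    (α₃ : ℝ → (Fin p → ℝ) → ℝ)
    (x : ℝ → (Fin n → ℝ)) (θh : ℝ → (Fin p → ℝ)) (u : ℝ → (Fin m → ℝ))
    -- the adaptation law τ(t) = ((∂V_a/∂x)(x(t),θ̂(t)) · F(x(t)))ᵀ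
    (τ : ℝ → (Fin p → ℝ))
    (hτ : ∀ t, 0 ≤ t → τ t = fun i =>
      (fderiv ℝ (fun y => Va (y, θh t)) (x t)) (fun j => F (x t) j i))
    -- closed-loop dynamics ẋ = f(x) + F(x) θ⋆ + g(x) u
    (hx : ∀ t, 0 ≤ t → HasDerivAt x
      (f (x t) + (F (x t)).mulVec θs + (g (x t)).mulVec (u t)) t)
    -- parameter update θ̂̇ = Γ τ
    (hθh : ∀ t, 0 ≤ t → HasDerivAt θh (Γ.mulVec (τ t)) t)
    -- the aCLF inequality
    (hclf : ∀ t, 0 ≤ t →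
      (fderiv ℝ (fun y => Va (y, θh t)) (x t))
        (f (x t)
          + (F (x t)).mulVec
              (θh t + Γ.mulVec (fun i =>
                (fderiv ℝ (fun θ => Va (x t, θ)) (θh t)) (Pi.single i 1)))
          + (g (x t)).mulVec (u t))
      ≤ -α₃ (euclNorm (x t)) (θh t))
    -- nonnegativity of α₃ along the trajectory
    (hα₃ : ∀ t, 0 ≤ t → 0 ≤ α₃ (euclNorm (x t)) (θh t))
    -- the composite Lyapunov function
    (V : ℝ → ℝ)
    (hV : V = fun t => Va (x t, θh t)
      + (1 / 2) * ((θs - θh t) ⬝ᵥ Γ⁻¹.mulVec (θs - θh t))) :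
    ∀ t, 0 ≤ t →
      α₁ (euclNorm (x t)) (θh t) ≤ V 0 ∧
      (1 / 2) * ((θs - θh t) ⬝ᵥ Γ⁻¹.mulVec (θs - θh t)) ≤ V 0 ∧
      (euclNorm (θs - θh t)) ^ 2 ≤ 2 * (⨆ i, hΓ.1.eigenvalues i) * V 0 :=
  aclf_trajectories_globally_bounded_general Va hVa α₁ hα₁mono hα₁0 hlow f F g Γ hΓ θs α₃ x θh u τ
    hτ hx hθh hclf hα₃ V hV
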